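/- Let C be a right Hopf-Galois co-object over a Hopf algebra H with cotranslation map τ. Then Δ(τ(a⊗b)) = Σ τ(a₂⊗b₁) ⊗ τ(a₁⊗b₂) for all a,b ∈ C. -/

import Mathlib

open Coalgebra TensorProduct

universe u v w

/-- The canonical map `C ⊗ H → C ⊗ C`, `c ⊗ h ↦ Σ c₁ ⊗ c₂·h`, for a right action
`act` of `H` on `C`. -/
noncomputable def canMap {F : Type u} {C : Type v} {H : Type w} [Field F]
    [AddCommGroup C] [Module F C] [Coalgebra F C] [AddCommGroup H] [Module F H]
    (act : C →ₗ[F] H →ₗ[F] C) : C ⊗[F] H →ₗ[F] C ⊗[F] C :=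
  (LinearMap.lTensor C (TensorProduct.lift act)) ∘ₗ
    (TensorProduct.assoc F C C H).toLinearMap ∘ₗ
    (LinearMap.rTensor H (comul (R := F)))

/-- The cotranslation map `τ = (ε ⊗ id) ∘ can⁻¹ : C ⊗ C → H`, where `inv` is the
inverse of the canonical map. -/
noncomputable def cotr {F : Type u} {C : Type v} {H : Type w} [Field F]
    [AddCommGroup C] [Module F C] [Coalgebra F C] [AddCommGroup H] [Module F H]
    (inv : C ⊗[F] C →ₗ[F] C ⊗[F] H) : C ⊗[F] C →ₗ[F] H :=
  (TensorProduct.lid F H).toLinearMap ∘ₗ (LinearMap.rTensor H (counit (R := F))) ∘ₗ inv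

/-!
Since `can` is onto, it suffices to compare `Δ ∘ τ` with `(τ ⊗ τ) ∘ Δ_{Cᶜᵒᵖ ⊗ C}` on
`can (c ⊗ h) = Σ c₁ ⊗ c₂·h`, where `Δ ∘ τ` gives `ε(c) Δh`. On the other side, the module
coalgebra law `Δ(c·h) = Σ c₁·h₁ ⊗ c₂·h₂` and coassociativity give
`Σ τ(c₂ ⊗ c₃·h₁) ⊗ τ(c₁ ⊗ c₄·h₂) = Σ ε(c₂) h₁ ⊗ τ(c₁ ⊗ c₃·h₂) = Σ h₁ ⊗ τ(c₁ ⊗ c₂·h₂)`,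
which is `ε(c) Δh` again, as `τ(Σ d₁ ⊗ d₂·k) = ε(d) k`.
-/

section Coalgebra

variable {R C : Type*} [CommSemiring R] [AddCommMonoid C] [Module R C] [Coalgebra R C]

variable (R C) in
/-- The comultiplication of `Cᶜᵒᵖ ⊗ C`: `a ⊗ b ↦ Σ (a₂ ⊗ b₁) ⊗ (a₁ ⊗ b₂)`. -/
noncomputable def copTensorComul : C ⊗[R] C →ₗ[R] (C ⊗[R] C) ⊗[R] (C ⊗[R] C) :=
  (tensorTensorTensorComm R C C C C).toLinearMap ∘ₗ
    map ((TensorProduct.comm R C C).toLinearMap ∘ₗ comul) comul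

theorem copTensorComul_tmul {a b : C} {ι κ : Type*} (ra : Repr R a ι) (rb : Repr R b κ) :
    copTensorComul R C (a ⊗ₜ b) = ∑ i ∈ ra.index, ∑ j ∈ rb.index,
      (ra.right i ⊗ₜ rb.left j) ⊗ₜ[R] (ra.left i ⊗ₜ rb.right j) := by
  simp [copTensorComul, ← ra.eq, ← rb.eq, sum_tmul, tmul_sum, Finset.sum_comm (s := rb.index)]

theorem copTensorComul_comp_comul :
    copTensorComul R C ∘ₗ comul = LinearMap.rTensor (C ⊗[R] C) comul ∘ₗ
      (leftComm R C C C).toLinearMap ∘ₗ LinearMap.lTensor C comul ∘ₗ comul := by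
  simp only [copTensorComul, coassoc_simps]

theorem copTensorComul_comp_lTensor {ι : Type*} (s : Finset ι) (g : C →ₗ[R] C)
    (f₁ f₂ : ι → C →ₗ[R] C) (hg : comul ∘ₗ g = ∑ k ∈ s, map (f₁ k) (f₂ k) ∘ₗ comul) :
    copTensorComul R C ∘ₗ LinearMap.lTensor C g =
      ∑ k ∈ s, map (LinearMap.lTensor C (f₁ k)) (LinearMap.lTensor C (f₂ k)) ∘ₗ
        copTensorComul R C := by
  refine TensorProduct.ext' fun a b => ?_
  have hb := LinearMap.congr_fun hg b
  simp only [LinearMap.comp_apply, LinearMap.sum_apply] at hb ⊢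
  simp only [copTensorComul, LinearMap.comp_apply, LinearMap.lTensor_tmul,
    _root_.TensorProduct.map_tmul, hb]
  rw [← (ℛ R a).eq, ← (ℛ R b).eq]
  simp [sum_tmul, tmul_sum]

theorem map_smulRight_counit_leftComm_lTensor_comul {M N : Type*} [AddCommMonoid M]
    [Module R M] [AddCommMonoid N] [Module R N] (x : M) (φ : C ⊗[R] C →ₗ[R] N) (c : C) :
    map (counit.smulRight x) φ (leftComm R C C C (LinearMap.lTensor C comul (comul c))) =
      x ⊗ₜ φ (comul c) := by
  simp only [← (ℛ R c).eq, map_sum, LinearMap.lTensor_tmul, tmul_sum]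
  refine Finset.sum_congr rfl fun i _ => ?_
  conv_rhs => rw [← sum_counit_smul (R := R) (ℛ R ((ℛ R c).right i))]
  simp [← (ℛ R ((ℛ R c).right i)).eq, tmul_sum, smul_tmul]

end Coalgebra

section HopfGalois

variable {F C H : Type*} [Field F] [AddCommGroup C] [Module F C] [Coalgebra F C]
  [AddCommGroup H] [Module F H]

theorem canMap_tmul (act : C →ₗ[F] H →ₗ[F] C) (c : C) (h : H) :
    canMap act (c ⊗ₜ h) = LinearMap.lTensor C (act.flip h) (comul c) := by
  simp only [canMap, LinearMap.comp_apply, LinearMap.rTensor_tmul]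
  rw [← (ℛ F c).eq]
  simp [sum_tmul]

theorem cotr_canMap_tmul (act : C →ₗ[F] H →ₗ[F] C) (inv : C ⊗[F] C →ₗ[F] C ⊗[F] H)
    (hinv : inv ∘ₗ canMap act = LinearMap.id) (c : C) (h : H) :
    cotr inv (canMap act (c ⊗ₜ h)) = counit (R := F) c • h := by
  have hc : inv (canMap act (c ⊗ₜ h)) = c ⊗ₜ h := LinearMap.congr_fun hinv (c ⊗ₜ h)
  simp [cotr, hc]

theorem cotr_comp_lTensor_flip_comp_comul (act : C →ₗ[F] H →ₗ[F] C)
    (inv : C ⊗[F] C →ₗ[F] C ⊗[F] H) (hinv : inv ∘ₗ canMap act = LinearMap.id) (h : H) :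
    cotr inv ∘ₗ LinearMap.lTensor C (act.flip h) ∘ₗ comul = counit.smulRight h := by
  ext c
  simpa [canMap_tmul] using cotr_canMap_tmul act inv hinv c h

theorem map_cotr_copTensorComul_canMap_tmul [Coalgebra F H] (act : C →ₗ[F] H →ₗ[F] C)
    (inv : C ⊗[F] C →ₗ[F] C ⊗[F] H) (hinv : inv ∘ₗ canMap act = LinearMap.id)
    (c : C) {h : H} {ι : Type*} (rh : Repr F h ι)
    (hact : comul ∘ₗ act.flip h =
      ∑ k ∈ rh.index, map (act.flip (rh.left k)) (act.flip (rh.right k)) ∘ₗ comul) :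
    map (cotr inv) (cotr inv) (copTensorComul F C (canMap act (c ⊗ₜ h))) =
      counit (R := F) c • comul (R := F) h := by
  have hτ := cotr_comp_lTensor_flip_comp_comul act inv hinv
  calc map (cotr inv) (cotr inv) (copTensorComul F C (canMap act (c ⊗ₜ h)))
      = ∑ k ∈ rh.index, map (cotr inv ∘ₗ LinearMap.lTensor C (act.flip (rh.left k)))
          (cotr inv ∘ₗ LinearMap.lTensor C (act.flip (rh.right k)))
          (copTensorComul F C (comul c)) := by
        rw [canMap_tmul, ← LinearMap.comp_apply (copTensorComul F C),
          copTensorComul_comp_lTensor _ _ _ _ hact]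
        simp [map_comp]
    _ = ∑ k ∈ rh.index, map (counit.smulRight (rh.left k))
          (cotr inv ∘ₗ LinearMap.lTensor C (act.flip (rh.right k)))
          (leftComm F C C C (LinearMap.lTensor C comul (comul c))) := by
        rw [← LinearMap.comp_apply (copTensorComul F C), copTensorComul_comp_comul]
        simp [LinearMap.comp_assoc, hτ]
    _ = ∑ k ∈ rh.index, rh.left k ⊗ₜ (counit (R := F) c • rh.right k) := by
        refine Finset.sum_congr rfl fun k _ => ?_
        rw [map_smulRight_counit_leftComm_lTensor_comul, ← LinearMap.comp_apply,
          LinearMap.comp_assoc, hτ, LinearMap.smulRight_apply]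
    _ = counit (R := F) c • comul (R := F) h := by
        rw [← rh.eq, Finset.smul_sum]
        simp only [tmul_smul]

end HopfGalois

theorem cotr_comul_general {F : Type u} {C : Type v} {H : Type w} [Field F]
    [AddCommGroup C] [Module F C] [Coalgebra F C] [Ring H] [HopfAlgebra F H]
    (act : C →ₗ[F] H →ₗ[F] C)
    (hact_comul : ∀ (c : C) (h : H) (ιc : Type v) (rc : Coalgebra.Repr.{u, v, v} F c ιc)
      (ιh : Type w) (rh : Coalgebra.Repr.{u, w, w} F h ιh),
      comul (R := F) (act c h) = ∑ i ∈ rc.index, ∑ j ∈ rh.index,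
        act (rc.left i) (rh.left j) ⊗ₜ[F] act (rc.right i) (rh.right j))
    (inv : C ⊗[F] C →ₗ[F] C ⊗[F] H)
    (hinv₁ : canMap act ∘ₗ inv = LinearMap.id)
    (hinv₂ : inv ∘ₗ canMap act = LinearMap.id)
    :
    ∀ (a b : C) (ιa : Type v) (ra : Coalgebra.Repr.{u, v, v} F a ιa) (ιb : Type v)
      (rb : Coalgebra.Repr.{u, v, v} F b ιb),
      comul (R := F) (cotr inv (a ⊗ₜ[F] b)) =
        ∑ i ∈ ra.index, ∑ j ∈ rb.index,
          cotr inv (ra.right i ⊗ₜ[F] rb.left j) ⊗ₜ[F] cotr inv (ra.left i ⊗ₜ[F] rb.right j) := by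
  intro a b ιa ra ιb rb
  have hact (h : H) : comul ∘ₗ act.flip h = ∑ k ∈ (ℛ F h).index,
      map (act.flip ((ℛ F h).left k)) (act.flip ((ℛ F h).right k)) ∘ₗ comul := by
    ext c
    rw [LinearMap.comp_apply, LinearMap.flip_apply, hact_comul c h _ (ℛ F c) _ (ℛ F h),
      Finset.sum_comm]
    simp [← (ℛ F c).eq]
  have hcan : comul ∘ₗ cotr inv ∘ₗ canMap act =
      map (cotr inv) (cotr inv) ∘ₗ copTensorComul F C ∘ₗ canMap act :=
    TensorProduct.ext' fun c h => by
      simp only [LinearMap.comp_apply]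
      rw [cotr_canMap_tmul act inv hinv₂, map_smul,
        map_cotr_copTensorComul_canMap_tmul act inv hinv₂ c (ℛ F h) (hact h)]
  have hcomul : comul ∘ₗ cotr inv = map (cotr inv) (cotr inv) ∘ₗ copTensorComul F C := by
    simpa [LinearMap.comp_assoc, hinv₁] using congrArg (· ∘ₗ inv) hcan
  rw [← LinearMap.comp_apply comul, hcomul, LinearMap.comp_apply, copTensorComul_tmul ra rb]
  simp [map_sum]

/-- The cotranslation map is "anti-comultiplicative":
`Δ(τ(a⊗b)) = Σ τ(a₂⊗b₁) ⊗ τ(a₁⊗b₂)`. -/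
theorem cotr_comul {F : Type u} {C : Type v} {H : Type w} [Field F]
    [AddCommGroup C] [Module F C] [Coalgebra F C] [Ring H] [HopfAlgebra F H]
    (act : C →ₗ[F] H →ₗ[F] C)
    (hact_one : ∀ c : C, act c 1 = c)
    (hact_mul : ∀ (c : C) (h k : H), act (act c h) k = act c (h * k))
    (hact_comul : ∀ (c : C) (h : H) (ιc : Type v) (rc : Coalgebra.Repr.{u, v, v} F c ιc)
      (ιh : Type w) (rh : Coalgebra.Repr.{u, w, w} F h ιh),
      comul (R := F) (act c h) = ∑ i ∈ rc.index, ∑ j ∈ rh.index,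
        act (rc.left i) (rh.left j) ⊗ₜ[F] act (rc.right i) (rh.right j))
    (hact_counit : ∀ (c : C) (h : H),
      counit (R := F) (act c h) = counit (R := F) c * counit (R := F) h)
    (hker : LinearMap.ker (counit (R := F) : C →ₗ[F] F) =
      Submodule.span F {x : C | ∃ (c : C) (h : H), x = act c h - counit (R := F) h • c})
    (inv : C ⊗[F] C →ₗ[F] C ⊗[F] H)
    (hinv₁ : canMap act ∘ₗ inv = LinearMap.id)
    (hinv₂ : inv ∘ₗ canMap act = LinearMap.id)
    :
    ∀ (a b : C) (ιa : Type v) (ra : Coalgebra.Repr.{u, v, v} F a ιa) (ιb : Type v)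
      (rb : Coalgebra.Repr.{u, v, v} F b ιb),
      comul (R := F) (cotr inv (a ⊗ₜ[F] b)) =
        ∑ i ∈ ra.index, ∑ j ∈ rb.index,
          cotr inv (ra.right i ⊗ₜ[F] rb.left j) ⊗ₜ[F] cotr inv (ra.left i ⊗ₜ[F] rb.right j) :=
  cotr_comul_general act hact_comul inv hinv₁ hinv₂
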